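/- arXiv:1510.03688 — 2 statements merged into one kernel-verified Lean document; each statement's English description precedes it below -/
import Mathlib

section
/- In a local Moufang set with fixed non-equivalent points 0 and ∞ and a fixed μ-map τ, for every unit x we have μ_{-x} = μ_x^{-1}. -/
open Equiv

structure LocalMoufangSet (X : Type*) where
  r : X → X → Prop
  requiv : Equivalence r
  U : X → Subgroup (Equiv.Perm X)
  preserves : ∀ x : X, ∀ u ∈ U x, ∀ a b : X, r a b ↔ r (u a) (u b)
  big : ∃ a b c : X, ¬ r a b ∧ ¬ r b c ∧ ¬ r a c
  lm1 : ∀ x y : X, r x y → ∀ u ∈ U x, ∃ v ∈ U y, ∀ z : X, r (u z) (v z)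
  lm2_fix : ∀ x : X, ∀ u ∈ U x, u x = x
  lm2_trans : ∀ x y z : X, ¬ r y x → ¬ r z x → ∃! u : Equiv.Perm X, u ∈ U x ∧ u y = z
  lm2'_trans : ∀ x y z : X, ¬ r y x → ¬ r z x → ∃ u ∈ U x, r (u y) z
  lm2'_free : ∀ x : X, ∀ u ∈ U x, ∀ y : X, ¬ r y x → r (u y) y → ∀ z : X, r (u z) z
  lm3 : ∀ x : X, ∀ g ∈ (⨆ y : X, U y : Subgroup (Equiv.Perm X)),
      (U x).map (MulAut.conj g).toMonoidHom = U (g x)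

namespace LocalMoufangSet

variable {X : Type*} (M : LocalMoufangSet X)

/-- The little projective group. -/
def G : Subgroup (Equiv.Perm X) := ⨆ x : X, M.U x

/-- `x` is a unit with respect to the base points `o` (zero) and `ι` (infinity). -/
def IsUnitPt (o ι x : X) : Prop := ¬ M.r x o ∧ ¬ M.r x ι

/-- `μ` is the μ-map of `x`: it lies in the double coset `U_0 α_x U_0` and swaps `o` and `ι`.
(We use the left-action convention: a right product `g α h` corresponds to `h * α * g`.) -/
def IsMuMap (o ι x : X) (μ : Equiv.Perm X) : Prop :=
  μ o = ι ∧ μ ι = o ∧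
    ∃ a ∈ M.U ι, a o = x ∧ ∃ g ∈ M.U o, ∃ h ∈ M.U o, μ = h * a * g

/-- Specialness with respect to a μ-map `τ`: `(-x)τ = -(xτ)` for all units `x`. -/
def Special (o ι : X) (τ : Equiv.Perm X) : Prop :=
  ∀ z : X, IsUnitPt M o ι z → ∀ a ∈ M.U ι, a o = z → ∀ b ∈ M.U ι, b o = τ z →
    τ (a⁻¹ o) = b⁻¹ o

end LocalMoufangSet

/-!
The μ-map of a unit `y` is unique: in `μ = h * α_y * g` the root element `α_y ∈ U_∞` is fixed by
`α_y 0 = y`, while `h, g ∈ U_0` are fixed by `h y = ∞` and `g ∞ = -y`, these being forced by `μ`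
swapping `0` and `∞`. Inverting `μ_x = h * α_x * g` gives `g⁻¹ * α_x⁻¹ * h⁻¹`, which again swaps
`0` and `∞` and lies in `U_0 α_{-x} U_0` since `α_{-x} = α_x⁻¹`; hence it is `μ_{-x}`.
-/

namespace LocalMoufangSet

variable {X : Type*} (M : LocalMoufangSet X)

theorem r_inv_apply_iff {x : X} {u : Perm X} (hu : u ∈ M.U x) (a b : X) :
    M.r (u⁻¹ a) b ↔ M.r a (u b) := by
  simpa using M.preserves x u hu (u⁻¹ a) b

theorem eq_of_mem_U_of_apply_eq {x y : X} (hy : ¬ M.r y x) {u v : Perm X}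
    (hu : u ∈ M.U x) (hv : v ∈ M.U x) (huv : u y = v y) : u = v := by
  by_cases hxy : M.r (u y) x
  · exact absurd ((M.preserves x u hu y x).mpr (by rwa [M.lm2_fix x u hu])) hy
  · exact (M.lm2_trans x y (u y) hy hxy).unique ⟨hu, rfl⟩ ⟨hv, huv.symm⟩

theorem isUnitPt_inv_apply {o ι x : X} (h0 : ¬ M.r o ι) (hx : M.IsUnitPt o ι x)
    {α : Perm X} (hαU : α ∈ M.U ι) (hαo : α o = x) : M.IsUnitPt o ι (α⁻¹ o) := by
  refine ⟨fun h => hx.1 ?_, fun h => h0 ?_⟩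
  · exact M.requiv.symm (hαo ▸ (M.r_inv_apply_iff hαU o o).mp h)
  · simpa [M.lm2_fix ι α hαU] using (M.r_inv_apply_iff hαU o ι).mp h

theorem factors_apply_of_swaps {o ι y : X} {a g h : Perm X} (hao : a o = y) (hg : g ∈ M.U o)
    (hh : h ∈ M.U o) (hμo : (h * a * g) o = ι) (hμι : (h * a * g) ι = o) :
    h y = ι ∧ g ι = a⁻¹ o := by
  have hgo := M.lm2_fix o g hg
  have hho := M.lm2_fix o h hh
  refine ⟨by simpa [Perm.mul_apply, hgo, hao] using hμo, ?_⟩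
  have hag : a (g ι) = o := h.injective (by simpa [Perm.mul_apply, hho] using hμι)
  exact Perm.eq_inv_iff_eq.mpr hag

variable {M}

theorem IsMuMap.unique {o ι y : X} (h0 : ¬ M.r o ι) (hy : M.IsUnitPt o ι y)
    {μ₁ μ₂ : Perm X} (h₁ : M.IsMuMap o ι y μ₁) (h₂ : M.IsMuMap o ι y μ₂) : μ₁ = μ₂ := by
  have hιo : ¬ M.r ι o := fun h => h0 (M.requiv.symm h)
  obtain ⟨hμ₁o, hμ₁ι, a₁, ha₁, ha₁o, g₁, hg₁, h₁, hh₁, rfl⟩ := h₁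
  obtain ⟨hμ₂o, hμ₂ι, a₂, ha₂, ha₂o, g₂, hg₂, h₂, hh₂, rfl⟩ := h₂
  have ha : a₁ = a₂ := M.eq_of_mem_U_of_apply_eq h0 ha₁ ha₂ (ha₁o.trans ha₂o.symm)
  subst ha
  obtain ⟨hh₁y, hg₁ι⟩ := M.factors_apply_of_swaps ha₁o hg₁ hh₁ hμ₁o hμ₁ι
  obtain ⟨hh₂y, hg₂ι⟩ := M.factors_apply_of_swaps ha₂o hg₂ hh₂ hμ₂o hμ₂ι
  have hh : h₁ = h₂ := M.eq_of_mem_U_of_apply_eq hy.1 hh₁ hh₂ (hh₁y.trans hh₂y.symm)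
  have hg : g₁ = g₂ := M.eq_of_mem_U_of_apply_eq hιo hg₁ hg₂ (hg₁ι.trans hg₂ι.symm)
  rw [hh, hg]

theorem IsMuMap.inv {o ι x : X} (h0 : ¬ M.r o ι) {α μ : Perm X}
    (hαU : α ∈ M.U ι) (hαo : α o = x) (hμ : M.IsMuMap o ι x μ) :
    M.IsMuMap o ι (α⁻¹ o) μ⁻¹ := by
  obtain ⟨hμo, hμι, a, haU, hao, g, hgU, h, hhU, rfl⟩ := hμ
  have ha : a = α := M.eq_of_mem_U_of_apply_eq h0 haU hαU (hao.trans hαo.symm)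
  refine ⟨?_, ?_, a⁻¹, inv_mem haU, by rw [ha], h⁻¹, inv_mem hhU, g⁻¹, inv_mem hgU,
    by simp only [mul_inv_rev, mul_assoc]⟩
  · rw [Perm.inv_eq_iff_eq, hμι]
  · rw [Perm.inv_eq_iff_eq, hμo]

end LocalMoufangSet

/-- `μ_{-x} = μ_x⁻¹`.  Here `-x = α_x⁻¹ o`. -/
theorem stmt4 {X : Type*} (M : LocalMoufangSet X) (o ι : X) (h0 : ¬ M.r o ι)
    (x : X) (hx : M.IsUnitPt o ι x)
    (α : Equiv.Perm X) (hαU : α ∈ M.U ι) (hαo : α o = x)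
    (μ ν : Equiv.Perm X)
    (hμ : M.IsMuMap o ι x μ) (hν : M.IsMuMap o ι (α⁻¹ o) ν) :
    ν = μ⁻¹ :=
  hν.unique h0 (M.isUnitPt_inv_apply h0 hx hαU hαo) (hμ.inv h0 hαU hαo)
end

section
/- In a local Moufang set, the Hua subgroup H = <μ_x μ_y : x, y units> equals the two-point stabilizer G_{0,∞} of 0 and ∞ in the little projective group; moreover the point stabilizer G_0 equals U_0 H, and G = U_0 H U_∞ ∪ U_0 H τ U_0°. -/
open Equiv

/-!
Let `T = U_∞ H U_0 ∪ U_0° τ H U_0` (`cells`, with products written for the left action).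
Since `H` fixes `0` and `∞`, it normalizes `U_0`, so `T` is stable under right multiplication
by `H` and `U_0`. The heart of the proof is that `T` is also stable under left multiplication
by every μ-map and by every element of `U_0` that moves the class of `∞`. These elements
generate `G = ⟨U_0, U_∞⟩`: an element of `U_∞` moving the class of `0` lies in `U_0 μ U_0`,
and an element of a root group acting trivially on the classes is a product of two that do
not. Hence `G ⊆ T`, and reading off the image of `0` gives `G_0 = H U_0`, then `G_{0,∞} = H`.
-/

open scoped Pointwise

theorem MulAction.mem_stabilizer_set_of_forall_mul_mem {G : Type*} [Group G] {s : Set G} {g : G}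
    (h₁ : ∀ t ∈ s, g * t ∈ s) (h₂ : ∀ t ∈ s, g⁻¹ * t ∈ s) : g ∈ MulAction.stabilizer G s :=
  MulAction.mem_stabilizer_set.2 fun t => ⟨fun ht => by simpa using h₂ _ ht, h₁ t⟩

namespace LocalMoufangSet

variable {X : Type*}

def FixesClasses (M : LocalMoufangSet X) (g : Perm X) : Prop := ∀ z, M.r (g z) z

variable {M : LocalMoufangSet X}

theorem U_le_G (x : X) : M.U x ≤ M.G := le_iSup M.U x

theorem G_preserves_r {g : Perm X} (hg : g ∈ M.G) (a b : X) : M.r a b ↔ M.r (g a) (g b) := by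
  let K : Subgroup (Perm X) :=
    { carrier := {g | ∀ a b, M.r a b ↔ M.r (g a) (g b)}
      one_mem' := fun _ _ => Iff.rfl
      mul_mem' := fun {_ g} hf hg a b => (hg a b).trans (hf (g a) (g b))
      inv_mem' := fun {f} hf a b => by simpa using (hf (f⁻¹ a) (f⁻¹ b)).symm }
  exact (iSup_le fun x u hu => M.preserves x u hu : M.G ≤ K) hg a b

theorem r_inv_apply_iff_s10 {g : Perm X} (hg : g ∈ M.G) (z : X) :
    M.r (g⁻¹ z) z ↔ M.r (g z) z := by
  rw [G_preserves_r hg, ← Perm.mul_apply, mul_inv_cancel, Perm.one_apply]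
  exact ⟨M.requiv.symm, M.requiv.symm⟩

theorem conj_mem_U {g u : Perm X} {x : X} (hg : g ∈ M.G) (hu : u ∈ M.U x) :
    g * u * g⁻¹ ∈ M.U (g x) :=
  M.lm3 x g hg ▸ ⟨u, hu, rfl⟩

theorem FixesClasses.conj {g k : Perm X} (hg : g ∈ M.G) (hk : M.FixesClasses k) :
    M.FixesClasses (g * k * g⁻¹) := fun z => by
  simpa using (G_preserves_r hg _ _).1 (hk (g⁻¹ z))

theorem exists_U_apply_eq {x y z : X} (hy : ¬ M.r y x) (hz : ¬ M.r z x) :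
    ∃ u ∈ M.U x, u y = z :=
  (M.lm2_trans x y z hy hz).exists

theorem eq_one_of_apply_eq_self {x y : X} {u : Perm X} (hu : u ∈ M.U x) (hy : ¬ M.r y x)
    (h : u y = y) : u = 1 :=
  (M.lm2_trans x y y hy hy).unique ⟨hu, h⟩ ⟨one_mem _, rfl⟩

theorem U_le_of_conj_mem {K : Subgroup (Perm X)} {w : Perm X} {y : X} (hw : w ∈ M.G)
    (hwK : w ∈ K) (hy : M.U y ≤ K) : M.U (w y) ≤ K := by
  rw [← M.lm3 y w hw]
  rintro _ ⟨u, hu, rfl⟩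
  exact mul_mem (mul_mem hwK (hy hu)) (inv_mem hwK)

theorem G_eq_sup {o ι : X} (h0 : ¬ M.r o ι) : M.G = M.U o ⊔ M.U ι := by
  refine le_antisymm (iSup_le fun x => ?_) (sup_le (U_le_G o) (U_le_G ι))
  by_cases hxo : M.r x o
  · have hxι : ¬ M.r x ι := fun h => h0 (M.requiv.trans (M.requiv.symm hxo) h)
    obtain ⟨w, hw, rfl⟩ := exists_U_apply_eq h0 hxι
    exact U_le_of_conj_mem (U_le_G ι hw) (le_sup_right (a := M.U o) hw) le_sup_left
  · obtain ⟨w, hw, rfl⟩ := exists_U_apply_eq (mt M.requiv.symm h0) hxo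
    exact U_le_of_conj_mem (U_le_G o hw) (le_sup_left (b := M.U ι) hw) le_sup_right

/-- Elements fixing the classes are products of two that do not: `u = (u α) α⁻¹` with `α y = e`. -/
theorem U_le_of_forall_not_r_mem {x y e : X} (hxy : ¬ M.r y x) (hex : ¬ M.r e x)
    (hey : ¬ M.r e y) {K : Subgroup (Perm X)} (hK : ∀ u ∈ M.U x, ¬ M.r (u y) y → u ∈ K) :
    M.U x ≤ K := by
  intro u hu
  by_cases huy : M.r (u y) y
  · obtain ⟨α, hα, hαy⟩ := exists_U_apply_eq hxy hex
    have hu' : ¬ M.r ((u * α) y) y := fun h =>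
      hey (M.requiv.trans (M.requiv.symm (M.lm2'_free x u hu y hxy huy e)) (hαy ▸ h))
    have hα' : ¬ M.r (α⁻¹ y) y := by rwa [r_inv_apply_iff_s10 (U_le_G x hα), hαy]
    simpa using mul_mem (hK _ (mul_mem hu hα) hu') (hK _ (inv_mem hα) hα')
  · exact hK u hu huy

variable {o ι : X}

theorem IsMuMap.isUnitPt (h0 : ¬ M.r o ι) {x : X} {μ : Perm X} (h : M.IsMuMap o ι x μ) :
    M.IsUnitPt o ι x := by
  obtain ⟨hμo, -, a, ha, rfl, g, hg, k, hk, rfl⟩ := h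
  have hka : k (a o) = ι := by simpa [M.lm2_fix o g hg] using hμo
  refine ⟨fun hr => h0 (M.requiv.symm ?_), fun hr => h0 ?_⟩
  · simpa [hka, M.lm2_fix o k hk] using (M.preserves o k hk _ _).1 hr
  · exact (M.preserves ι a ha o ι).2 (by rwa [M.lm2_fix ι a ha])

variable (M o ι) in
def IsMu (σ : Perm X) : Prop := ∃ x, M.IsMuMap o ι x σ

theorem IsMu.mem_G {σ : Perm X} (h : M.IsMu o ι σ) : σ ∈ M.G := by
  obtain ⟨_, -, -, a, ha, -, g, hg, k, hk, rfl⟩ := h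
  exact mul_mem (mul_mem (U_le_G o hk) (U_le_G ι ha)) (U_le_G o hg)

theorem IsMu.apply_zero {σ : Perm X} (h : M.IsMu o ι σ) : σ o = ι :=
  h.choose_spec.1

theorem IsMu.apply_inf {σ : Perm X} (h : M.IsMu o ι σ) : σ ι = o :=
  h.choose_spec.2.1

theorem IsMu.inv {σ : Perm X} (h : M.IsMu o ι σ) : M.IsMu o ι σ⁻¹ := by
  obtain ⟨_, hσo, hσι, a, ha, -, g, hg, k, hk, rfl⟩ := h
  exact ⟨a⁻¹ o, Perm.inv_eq_iff_eq.2 hσι.symm, Perm.inv_eq_iff_eq.2 hσo.symm,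
    a⁻¹, inv_mem ha, rfl, k⁻¹, inv_mem hk, g⁻¹, inv_mem hg, by group⟩

variable (M o ι) in
def hua : Subgroup (Perm X) :=
  Subgroup.closure {g : Equiv.Perm X |
    ∃ x y : X, ∃ μx μy : Equiv.Perm X, M.IsUnitPt o ι x ∧ M.IsUnitPt o ι y ∧
      M.IsMuMap o ι x μx ∧ M.IsMuMap o ι y μy ∧ g = μy * μx}

theorem IsMu.mul_mem_hua (h0 : ¬ M.r o ι) {σ₁ σ₂ : Perm X} (h₁ : M.IsMu o ι σ₁)
    (h₂ : M.IsMu o ι σ₂) : σ₁ * σ₂ ∈ M.hua o ι := by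
  obtain ⟨x₁, h₁⟩ := h₁
  obtain ⟨x₂, h₂⟩ := h₂
  exact Subgroup.subset_closure ⟨x₂, x₁, σ₂, σ₁, h₂.isUnitPt h0, h₁.isUnitPt h0, h₂, h₁, rfl⟩

theorem hua_le_stabilizer :
    M.hua o ι ≤ M.G ⊓ MulAction.stabilizer (Perm X) o ⊓ MulAction.stabilizer (Perm X) ι := by
  refine (Subgroup.closure_le _).2 ?_
  rintro _ ⟨x, y, μx, μy, -, -, hx, hy, rfl⟩
  exact ⟨⟨mul_mem (IsMu.mem_G ⟨y, hy⟩) (IsMu.mem_G ⟨x, hx⟩),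
    by simp [Perm.smul_def, hx.1, hy.2.1]⟩, by simp [Perm.smul_def, hx.2.1, hy.1]⟩

theorem inv_mul_mul_mem_U_of_mem_hua {h a : Perm X} (hh : h ∈ M.hua o ι) (ha : a ∈ M.U o) :
    h⁻¹ * a * h ∈ M.U o := by
  obtain ⟨⟨hG, ho⟩, -⟩ := hua_le_stabilizer hh
  have := conj_mem_U (inv_mem hG) ha
  rwa [inv_inv, Perm.inv_eq_iff_eq.2 (ho : h o = o).symm] at this

theorem exists_eq_mul_mu_mul (h0 : ¬ M.r o ι) {b : Perm X} (hb : b ∈ M.U ι)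
    (hbo : ¬ M.r (b o) o) :
    ∃ k ∈ M.U o, ¬ M.r (k ι) ι ∧ ∃ σ, M.IsMu o ι σ ∧ ∃ g ∈ M.U o, b = k * σ * g := by
  have hιo : ¬ M.r ι o := mt M.requiv.symm h0
  have hbι : ¬ M.r (b o) ι := fun h => h0 ((M.preserves ι b hb o ι).2 (by rwa [M.lm2_fix ι b hb]))
  have hb'o : ¬ M.r (b⁻¹ o) o := by rwa [r_inv_apply_iff_s10 (U_le_G ι hb)]
  obtain ⟨k, hk, hkι⟩ := exists_U_apply_eq hιo hbo
  obtain ⟨g, hg, hgb⟩ := exists_U_apply_eq hb'o hιo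
  refine ⟨k, hk, hkι ▸ hbι, k⁻¹ * b * g⁻¹, ⟨b o, ?_, ?_, b, hb, rfl, g⁻¹, inv_mem hg, k⁻¹,
    inv_mem hk, rfl⟩, g, hg, by group⟩
  · simp [Equiv.symm_apply_eq, hkι, M.lm2_fix o g hg]
  · rw [Perm.mul_apply, Perm.mul_apply, Perm.inv_eq_iff_eq.2 hgb.symm]
    simp [Equiv.symm_apply_eq, M.lm2_fix o k hk]

variable (M o ι) in
def bigCell : Set (Perm X) :=
  {g | ∃ a ∈ M.U o, ∃ h ∈ M.hua o ι, ∃ b ∈ M.U ι, g = b * h * a}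

variable (M o ι) in
def smallCell (τ : Perm X) : Set (Perm X) :=
  {g | ∃ a ∈ M.U o, ∃ h ∈ M.hua o ι, ∃ c ∈ M.U o, M.FixesClasses c ∧ g = c * τ * h * a}

variable (M o ι) in
def cells (τ : Perm X) : Set (Perm X) := M.bigCell o ι ∪ M.smallCell o ι τ

variable {τ : Perm X}

theorem mul_mem_bigCell {g h a : Perm X} (hg : g ∈ M.bigCell o ι) (hh : h ∈ M.hua o ι)
    (ha : a ∈ M.U o) : g * h * a ∈ M.bigCell o ι := by
  obtain ⟨a', ha', h', hh', b, hb, rfl⟩ := hg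
  exact ⟨h⁻¹ * a' * h * a, mul_mem (inv_mul_mul_mem_U_of_mem_hua hh ha') ha, h' * h,
    mul_mem hh' hh, b, hb, by group⟩

theorem mul_mem_smallCell {g h a : Perm X} (hg : g ∈ M.smallCell o ι τ) (hh : h ∈ M.hua o ι)
    (ha : a ∈ M.U o) : g * h * a ∈ M.smallCell o ι τ := by
  obtain ⟨a', ha', h', hh', c, hc, hck, rfl⟩ := hg
  exact ⟨h⁻¹ * a' * h * a, mul_mem (inv_mul_mul_mem_U_of_mem_hua hh ha') ha, h' * h,
    mul_mem hh' hh, c, hc, hck, by group⟩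

theorem mul_mem_cells {g h a : Perm X} (hg : g ∈ M.cells o ι τ) (hh : h ∈ M.hua o ι)
    (ha : a ∈ M.U o) : g * h * a ∈ M.cells o ι τ :=
  hg.imp (mul_mem_bigCell · hh ha) (mul_mem_smallCell · hh ha)

theorem U_inf_mul_mem_bigCell {b g : Perm X} (hb : b ∈ M.U ι) (hg : g ∈ M.bigCell o ι) :
    b * g ∈ M.bigCell o ι := by
  obtain ⟨a, ha, h, hh, b', hb', rfl⟩ := hg
  exact ⟨a, ha, h, hh, b * b', mul_mem hb hb', by group⟩

theorem mul_mu_mem_bigCell (h0 : ¬ M.r o ι) {u σ : Perm X} (hu : u ∈ M.U o)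
    (huι : ¬ M.r (u ι) ι) (hσ : M.IsMu o ι σ) : u * σ ∈ M.bigCell o ι := by
  have hv : σ⁻¹ * u * σ ∈ M.U ι := by
    simpa only [inv_inv, hσ.inv.apply_zero] using conj_mem_U (inv_mem hσ.mem_G) hu
  have hvo : ¬ M.r ((σ⁻¹ * u * σ) o) o := by
    rwa [Perm.mul_apply, hσ.apply_zero, Perm.mul_apply, G_preserves_r hσ.mem_G,
      ← Perm.mul_apply σ σ⁻¹, mul_inv_cancel, Perm.one_apply, hσ.apply_zero]
  obtain ⟨k, hk, -, σ', hσ', g, hg, hdec⟩ := exists_eq_mul_mu_mul h0 hv hvo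
  have hk' : σ * k * σ⁻¹ ∈ M.U ι := hσ.apply_zero ▸ conj_mem_U hσ.mem_G hk
  refine ⟨g, hg, σ * σ', hσ.mul_mem_hua h0 hσ', σ * k * σ⁻¹, hk', ?_⟩
  calc u * σ = σ * (σ⁻¹ * u * σ) := by group
    _ = σ * k * σ⁻¹ * (σ * σ') * g := by rw [hdec]; group

theorem mul_mu_mem_cells (h0 : ¬ M.r o ι) (hτ : M.IsMu o ι τ) {u σ : Perm X} (hu : u ∈ M.U o)
    (hσ : M.IsMu o ι σ) : u * σ ∈ M.cells o ι τ := by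
  by_cases huι : M.r (u ι) ι
  · have huk := M.lm2'_free o u hu ι (mt M.requiv.symm h0) huι
    exact .inr ⟨1, one_mem _, τ⁻¹ * σ, hτ.inv.mul_mem_hua h0 hσ, u, hu, huk, by group⟩
  · exact .inl (mul_mu_mem_bigCell h0 hu huι hσ)

theorem mul_U_inf_mem_cells (h0 : ¬ M.r o ι) (hτ : M.IsMu o ι τ) {u b : Perm X}
    (hu : u ∈ M.U o) (hb : b ∈ M.U ι) (hbo : ¬ M.r (b o) o) : u * b ∈ M.cells o ι τ := by
  obtain ⟨k, hk, -, σ, hσ, g, hg, rfl⟩ := exists_eq_mul_mu_mul h0 hb hbo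
  convert mul_mem_cells (mul_mu_mem_cells h0 hτ (mul_mem hu hk) hσ) (one_mem _) hg using 1
  group

/-- Conjugating by `u` and then by `β ∈ U_∞` with `β 0 = u ∞` moves `b` into `U_0`. -/
theorem mul_U_inf_mem_bigCell_of_fixesClasses (h0 : ¬ M.r o ι) {u b : Perm X} (hu : u ∈ M.U o)
    (huι : ¬ M.r (u ι) ι) (hb : b ∈ M.U ι) (hbk : M.FixesClasses b) :
    u * b ∈ M.bigCell o ι := by
  have huG := U_le_G o hu
  have huo : ¬ M.r (u ι) o := by
    rw [← M.lm2_fix o u hu, ← G_preserves_r huG]; exact mt M.requiv.symm h0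
  obtain ⟨β, hβ, hβo⟩ := exists_U_apply_eq h0 huι
  have hβG := U_le_G ι hβ
  set d := β⁻¹ * (u * b * u⁻¹) * β with hd_def
  have hd : d ∈ M.U o := by
    have := conj_mem_U (inv_mem hβG) (conj_mem_U huG hb)
    rwa [inv_inv, Perm.inv_eq_iff_eq.2 hβo.symm] at this
  have hdk : M.FixesClasses d := by
    simpa only [inv_inv] using (hbk.conj huG).conj (inv_mem hβG)
  have hβ'o : ¬ M.r (β⁻¹ o) o := by rwa [r_inv_apply_iff_s10 hβG, hβo]
  obtain ⟨k, hk, hkι, σ, hσ, g, hg, hdec⟩ := exists_eq_mul_mu_mul h0 (inv_mem hβ) hβ'o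
  have hdkι : ¬ M.r ((d * k) ι) ι := fun h => hkι (M.requiv.trans (M.requiv.symm (hdk _)) h)
  have := U_inf_mul_mem_bigCell hβ (mul_mem_bigCell
    (mul_mu_mem_bigCell h0 (mul_mem hd hk) hdkι hσ) (one_mem _) (mul_mem hg hu))
  convert this using 1
  calc u * b = β * d * β⁻¹ * u := by rw [hd_def]; group
    _ = β * (d * k * σ * 1 * (g * u)) := by rw [hdec]; group

theorem U_zero_mul_mem_cells (h0 : ¬ M.r o ι) (hτ : M.IsMu o ι τ) {u g : Perm X}
    (hu : u ∈ M.U o) (huι : ¬ M.r (u ι) ι) (hg : g ∈ M.cells o ι τ) :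
    u * g ∈ M.cells o ι τ := by
  rcases hg with ⟨a, ha, h, hh, b, hb, rfl⟩ | ⟨a, ha, h, hh, c, hc, -, rfl⟩
  · have hub : u * b ∈ M.cells o ι τ := by
      by_cases hbo : M.r (b o) o
      · exact .inl (mul_U_inf_mem_bigCell_of_fixesClasses h0 hu huι hb
          (M.lm2'_free ι b hb o h0 hbo))
      · exact mul_U_inf_mem_cells h0 hτ hu hb hbo
    convert mul_mem_cells hub hh ha using 1
    group
  · convert mul_mem_cells (mul_mu_mem_cells h0 hτ (mul_mem hu hc) hτ) hh ha using 1
    group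

theorem mu_mul_mem_cells (h0 : ¬ M.r o ι) (hτ : M.IsMu o ι τ) {σ g : Perm X}
    (hσ : M.IsMu o ι σ) (hg : g ∈ M.cells o ι τ) : σ * g ∈ M.cells o ι τ := by
  rcases hg with ⟨a, ha, h, hh, b, hb, rfl⟩ | ⟨a, ha, h, hh, c, hc, -, rfl⟩
  · have hb' : σ * b * σ⁻¹ ∈ M.U o := hσ.apply_inf ▸ conj_mem_U hσ.mem_G hb
    convert mul_mem_cells (mul_mu_mem_cells h0 hτ hb' hσ) hh ha using 1
    group
  · have hc' : σ * c * σ⁻¹ ∈ M.U ι := hσ.apply_zero ▸ conj_mem_U hσ.mem_G hc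
    exact .inl ⟨a, ha, σ * τ * h, mul_mem (hσ.mul_mem_hua h0 hτ) hh, σ * c * σ⁻¹, hc', by group⟩

theorem G_subset_cells (h0 : ¬ M.r o ι) (hτ : M.IsMu o ι τ) :
    (M.G : Set (Perm X)) ⊆ M.cells o ι τ := by
  obtain ⟨e, heτ⟩ := id hτ
  have he := heτ.isUnitPt h0
  have hιo : ¬ M.r ι o := mt M.requiv.symm h0
  set K := MulAction.stabilizer (Perm X) (M.cells o ι τ)
  have hU0 : M.U o ≤ K := U_le_of_forall_not_r_mem hιo he.1 he.2 fun u hu huι =>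
    MulAction.mem_stabilizer_set_of_forall_mul_mem (fun _ => U_zero_mul_mem_cells h0 hτ hu huι)
      (fun _ => U_zero_mul_mem_cells h0 hτ (inv_mem hu) (by rwa [r_inv_apply_iff_s10 (U_le_G o hu)]))
  have hμ {σ : Perm X} (hσ : M.IsMu o ι σ) : σ ∈ K :=
    MulAction.mem_stabilizer_set_of_forall_mul_mem (fun _ => mu_mul_mem_cells h0 hτ hσ)
      (fun _ => mu_mul_mem_cells h0 hτ hσ.inv)
  have hUι : M.U ι ≤ K := U_le_of_forall_not_r_mem h0 he.2 he.1 fun b hb hbo => by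
    obtain ⟨k, hk, -, σ, hσ, g, hg, rfl⟩ := exists_eq_mul_mu_mul h0 hb hbo
    exact mul_mem (mul_mem (hU0 hk) (hμ hσ)) (hU0 hg)
  intro g hg
  have hgK : g ∈ K := (G_eq_sup h0 ▸ sup_le hU0 hUι) hg
  simpa using (MulAction.mem_stabilizer_set.1 hgK 1).2
    (.inl ⟨1, one_mem _, 1, one_mem _, 1, one_mem _, by group⟩)

theorem exists_hua_mul_of_mem_cells (h0 : ¬ M.r o ι) (hτ : τ o = ι) {g : Perm X}
    (hg : g ∈ M.cells o ι τ) (hgo : g o = o) : ∃ h ∈ M.hua o ι, ∃ a ∈ M.U o, g = h * a := by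
  rcases hg with ⟨a, ha, h, hh, b, hb, rfl⟩ | ⟨a, ha, h, hh, c, hc, hck, rfl⟩
  all_goals obtain ⟨⟨-, (ho : h o = o)⟩, -⟩ := hua_le_stabilizer hh
  · have hbo : b o = o := by simpa [M.lm2_fix o a ha, ho] using hgo
    obtain rfl := eq_one_of_apply_eq_self hb h0 hbo
    exact ⟨h, hh, a, ha, by group⟩
  · have hco : c ι = o := by simpa [M.lm2_fix o a ha, ho, hτ] using hgo
    exact absurd (hck ι) (by rwa [hco])

theorem mem_G_and_apply_zero_iff (h0 : ¬ M.r o ι) (hτ : M.IsMu o ι τ) (g : Perm X) :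
    g ∈ M.G ∧ g o = o ↔ ∃ h ∈ M.hua o ι, ∃ a ∈ M.U o, g = h * a := by
  refine ⟨fun ⟨hg, hgo⟩ =>
    exists_hua_mul_of_mem_cells h0 hτ.apply_zero (G_subset_cells h0 hτ hg) hgo, ?_⟩
  rintro ⟨h, hh, a, ha, rfl⟩
  obtain ⟨⟨hG, (ho : h o = o)⟩, -⟩ := hua_le_stabilizer hh
  exact ⟨mul_mem hG (U_le_G o ha), by simp [M.lm2_fix o a ha, ho]⟩

theorem mem_hua_iff (h0 : ¬ M.r o ι) (hτ : M.IsMu o ι τ) (g : Perm X) :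
    g ∈ M.hua o ι ↔ g ∈ M.G ∧ g o = o ∧ g ι = ι := by
  refine ⟨fun hg => ?_, fun ⟨hg, hgo, hgι⟩ => ?_⟩
  · obtain ⟨⟨hG, ho⟩, hι⟩ := hua_le_stabilizer hg
    exact ⟨hG, ho, hι⟩
  · obtain ⟨h, hh, a, ha, rfl⟩ := (mem_G_and_apply_zero_iff h0 hτ _).1 ⟨hg, hgo⟩
    obtain ⟨-, (hι : h ι = ι)⟩ := hua_le_stabilizer hh
    have haι : a ι = ι := h.injective (hgι.trans hι.symm)
    rwa [eq_one_of_apply_eq_self ha (mt M.requiv.symm h0) haι, mul_one]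

end LocalMoufangSet

theorem stmt10_general {X : Type*} (M : LocalMoufangSet X) (o ι : X) (h0 : ¬ M.r o ι)
    (e : X) (τ : Equiv.Perm X) (hτ : M.IsMuMap o ι e τ)
    (H : Subgroup (Equiv.Perm X))
    (hH : H = Subgroup.closure {g : Equiv.Perm X |
      ∃ x y : X, ∃ μx μy : Equiv.Perm X, M.IsUnitPt o ι x ∧ M.IsUnitPt o ι y ∧
        M.IsMuMap o ι x μx ∧ M.IsMuMap o ι y μy ∧ g = μy * μx}) :
    (∀ g : Equiv.Perm X, g ∈ H ↔ (g ∈ M.G ∧ g o = o ∧ g ι = ι)) ∧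
    (∀ g : Equiv.Perm X, (g ∈ M.G ∧ g o = o) ↔ ∃ h ∈ H, ∃ a ∈ M.U o, g = h * a) ∧
    (∀ g ∈ M.G,
      (∃ a ∈ M.U o, ∃ h ∈ H, ∃ b ∈ M.U ι, g = b * h * a) ∨
      (∃ a ∈ M.U o, ∃ h ∈ H, ∃ c ∈ M.U o, (∀ z : X, M.r (c z) z) ∧
        g = c * τ * h * a)) := by
  obtain rfl : H = M.hua o ι := hH
  have hτ' : M.IsMu o ι τ := ⟨e, hτ⟩
  exact ⟨LocalMoufangSet.mem_hua_iff h0 hτ', LocalMoufangSet.mem_G_and_apply_zero_iff h0 hτ',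
    fun _ hg => LocalMoufangSet.G_subset_cells h0 hτ' hg⟩

/-- the Hua subgroup `H = ⟨μ_x μ_y : x, y units⟩` equals the
two-point stabilizer `G_{0,∞}`; `G_0 = U_0 H`; and `G = U_0 H U_∞ ∪ U_0 H τ U_0°`.
Left-action convention as before (right products reverse). -/
theorem stmt10 {X : Type*} (M : LocalMoufangSet X) (o ι : X) (h0 : ¬ M.r o ι)
    (e : X) (he : M.IsUnitPt o ι e)
    (τ : Equiv.Perm X) (hτ : M.IsMuMap o ι e τ)
    (H : Subgroup (Equiv.Perm X))
    (hH : H = Subgroup.closure {g : Equiv.Perm X |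
      ∃ x y : X, ∃ μx μy : Equiv.Perm X, M.IsUnitPt o ι x ∧ M.IsUnitPt o ι y ∧
        M.IsMuMap o ι x μx ∧ M.IsMuMap o ι y μy ∧ g = μy * μx}) :
    (∀ g : Equiv.Perm X, g ∈ H ↔ (g ∈ M.G ∧ g o = o ∧ g ι = ι)) ∧
    (∀ g : Equiv.Perm X, (g ∈ M.G ∧ g o = o) ↔ ∃ h ∈ H, ∃ a ∈ M.U o, g = h * a) ∧
    (∀ g ∈ M.G,
      (∃ a ∈ M.U o, ∃ h ∈ H, ∃ b ∈ M.U ι, g = b * h * a) ∨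
      (∃ a ∈ M.U o, ∃ h ∈ H, ∃ c ∈ M.U o, (∀ z : X, M.r (c z) z) ∧
        g = c * τ * h * a)) :=
  stmt10_general M o ι h0 e τ hτ H hH
end
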